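/- arXiv:1809.01440 — 5 statements merged into one kernel-verified Lean document; each statement's English description precedes it below -/
import Mathlib

section
/- Let L be a nondegenerate integral lattice (free abelian group of finite positive rank with a nondegenerate integral symmetric bilinear form) of discriminant d, and let G be a finite group acting on L preserving the bilinear form. If the fixed sublattice L^G is nonzero, then the restriction of the form to L^G is nondegenerate, so L^G is a lattice, and its discriminant divides (d·|G|)^r where r is the rank of L^G. -/
/-- The discriminant (Gram determinant) of a bilinear form on a finite free module,
computed with respect to a choice of basis. -/
noncomputable def gramDet (R : Type) (S : Type) {M : Type} [CommRing R] [AddCommGroup M]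
    [Module R M] [Module.Free R M] [Module.Finite R M] [CommRing S] (B : M → M → S) : S :=
  letI := Classical.decEq (Module.Free.ChooseBasisIndex R M)
  Matrix.det (Matrix.of fun i j => B (Module.Free.chooseBasis R M i) (Module.Free.chooseBasis R M j))

/-- The submodule of elements fixed by a group action given by linear automorphisms. -/
def fixedSubmodule {R M G : Type} [CommRing R] [AddCommGroup M] [Module R M] [Group G]
    (ρ : G →* (M ≃ₗ[R] M)) : Submodule R M where
  carrier := {x | ∀ g : G, ρ g x = x}
  zero_mem' := by intro g; simp
  add_mem' := by intro a b ha hb g; simp [ha g, hb g]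
  smul_mem' := by intro c x hx g; simp [hx g]

/-!
Let `d` be the discriminant of `L` and `N = |G|`. By Cramer's rule every functional on `L`,
multiplied by `d`, is of the form `B y`. Apply this to `f ∘ π` for a functional `f` on `L^G`,
where `π = ∑ g` is the norm map `L → L^G`: since `B y` is then `G`-invariant and `B` is
nondegenerate, `y` lies in `L^G`, and `B y = d N f` on `L^G`. Doing this for the coordinate
functionals of a basis of `L^G` gives an integral matrix `C` with `C · Gram(L^G) = d N · 1`, and
taking determinants yields the divisibility, hence also the nondegeneracy.
-/

open Module Matrix

namespace LinearMap

variable {R M ι : Type*} [CommRing R] [AddCommGroup M] [Module R M] [Fintype ι] [DecidableEq ι]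

theorem det_toMatrix₂_smul_mem_range (b : Basis ι R M) (B : M →ₗ[R] M →ₗ[R] R)
    (f : Dual R M) : (toMatrix₂ b b B).det • f ∈ range B := by
  set A := toMatrix₂ b b B
  -- Cramer's rule for `Aᵀ` gives the coordinates of a preimage.
  have hcramer := mulVec_cramer Aᵀ (fun k => f (b k))
  rw [mulVec_transpose, det_transpose] at hcramer
  refine ⟨b.equivFun.symm (cramer Aᵀ (fun k => f (b k))), b.ext fun j => ?_⟩
  simpa [A, Basis.equivFun_symm_apply, vecMul, dotProduct] using congrFun hcramer j

theorem det_toMatrix₂_dvd_pow_of_smul_mem_range (b : Basis ι R M) (B : M →ₗ[R] M →ₗ[R] R)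
    (c : R) (h : ∀ f : Dual R M, c • f ∈ range B) :
    (toMatrix₂ b b B).det ∣ c ^ Fintype.card ι := by
  choose m hm using fun i => h (b.coord i)
  set T : M →ₗ[R] M := b.constr R m
  have hT : toMatrix₂ b b (B.comp T) = c • (1 : Matrix ι ι R) := by
    ext i j
    simp [T, hm, Matrix.one_apply, Finsupp.single_apply, eq_comm]
  refine Dvd.intro_left (toMatrix b b T).det ?_
  rw [← det_transpose, ← det_mul, ← toMatrix₂_comp, hT, Matrix.det_smul, det_one, mul_one]

end LinearMap

namespace Representation

variable {k G V : Type*} [CommRing k] [Group G] [AddCommGroup V] [Module k V]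
  (ρ : Representation k G V)

section Norm

variable [Fintype G]

noncomputable def normInvariants : V →ₗ[k] ρ.invariants :=
  ρ.norm.codRestrict ρ.invariants fun x g => ρ.self_norm_apply g x

@[simp]
theorem normInvariants_self_apply (g : G) (x : V) :
    ρ.normInvariants (ρ g x) = ρ.normInvariants x :=
  Subtype.ext (ρ.norm_self_apply g x)

theorem normInvariants_apply_of_mem (x : ρ.invariants) :
    ρ.normInvariants x = Fintype.card G • x :=
  Subtype.ext <| by simp [normInvariants, norm, x.2 _]

end Norm

variable {ρ} {B : V →ₗ[k] V →ₗ[k] k}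

theorem mem_invariants_of_comp_eq (hB : ∀ g x y, B (ρ g x) (ρ g y) = B x y)
    (hinj : Function.Injective B) {y : V} (hy : ∀ g, B y ∘ₗ ρ g = B y) :
    y ∈ ρ.invariants := fun g => hinj <| by
  ext x
  calc B (ρ g y) x = B (ρ g y) (ρ g (ρ g⁻¹ x)) := by rw [ρ.self_inv_apply]
    _ = B y x := by rw [hB, ← LinearMap.comp_apply, hy]

theorem smul_mem_range_compl₁₂_invariants [Fintype G]
    (hB : ∀ g x y, B (ρ g x) (ρ g y) = B x y) (hinj : Function.Injective B) (c : k)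
    (hc : ∀ f : Dual k V, c • f ∈ LinearMap.range B) (f : Dual k ρ.invariants) :
    (c * Fintype.card G) • f ∈
      LinearMap.range (B.compl₁₂ ρ.invariants.subtype ρ.invariants.subtype) := by
  obtain ⟨y, hy⟩ := hc (f ∘ₗ ρ.normInvariants)
  have hy_mem : y ∈ ρ.invariants := mem_invariants_of_comp_eq hB hinj fun g => by
    ext x
    simp [hy]
  refine ⟨⟨y, hy_mem⟩, LinearMap.ext fun x => ?_⟩
  simp [hy, normInvariants_apply_of_mem, mul_assoc]

theorem det_toMatrix₂_invariants_dvd [IsDomain k] [Fintype G] {ι κ : Type*} [Fintype ι]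
    [DecidableEq ι] [Fintype κ] [DecidableEq κ] (hB : ∀ g x y, B (ρ g x) (ρ g y) = B x y)
    (b : Basis ι k V) (hdet : (LinearMap.toMatrix₂ b b B).det ≠ 0) (e : Basis κ k ρ.invariants) :
    (LinearMap.toMatrix₂ e e (B.compl₁₂ ρ.invariants.subtype ρ.invariants.subtype)).det ∣
      ((LinearMap.toMatrix₂ b b B).det * Fintype.card G) ^ Fintype.card κ :=
  have hinj : Function.Injective B := LinearMap.ker_eq_bot.mp <|
    LinearMap.separatingLeft_iff_ker_eq_bot.mp (LinearMap.separatingLeft_of_det_ne_zero b hdet)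
  LinearMap.det_toMatrix₂_dvd_pow_of_smul_mem_range e _ _ <|
    smul_mem_range_compl₁₂_invariants hB hinj _ (LinearMap.det_toMatrix₂_smul_mem_range b B)

end Representation

theorem gramDet_eq_det_toMatrix₂ {R M : Type} [CommRing R] [AddCommGroup M] [Module R M]
    [Module.Free R M] [Module.Finite R M] [DecidableEq (Free.ChooseBasisIndex R M)]
    (B : M →ₗ[R] M →ₗ[R] R) :
    gramDet R R (fun x y => B x y) =
      (LinearMap.toMatrix₂ (Free.chooseBasis R M) (Free.chooseBasis R M) B).det := by
  unfold gramDet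
  congr 1
  ext i j
  simp

theorem stmt0_general (L : Type) [AddCommGroup L] [Module.Free ℤ L] [Module.Finite ℤ L]
    (B : L →ₗ[ℤ] L →ₗ[ℤ] ℤ)
    (d : ℤ) (hd : d = gramDet ℤ ℤ (fun x y => B x y)) (hd0 : d ≠ 0)
    (G : Type) [Group G] [Fintype G]
    (ρ : G →* (L ≃ₗ[ℤ] L)) (hρ : ∀ (g : G) (x y : L), B (ρ g x) (ρ g y) = B x y) :
    gramDet ℤ ℤ (fun x y : fixedSubmodule ρ => B x y) ≠ 0 ∧
    gramDet ℤ ℤ (fun x y : fixedSubmodule ρ => B x y) ∣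
      (d * (Fintype.card G : ℤ)) ^ (Module.finrank ℤ (fixedSubmodule ρ)) := by
  classical
  have hdvd : gramDet ℤ ℤ (fun x y : fixedSubmodule ρ => B x y) ∣
      (d * (Fintype.card G : ℤ)) ^ (Module.finrank ℤ (fixedSubmodule ρ)) := by
    rw [gramDet_eq_det_toMatrix₂] at hd
    subst hd
    rw [Module.finrank_eq_card_chooseBasisIndex]
    -- `fixedSubmodule ρ` is definitionally the submodule of invariants of this representation.
    exact (gramDet_eq_det_toMatrix₂ (B.compl₁₂ (fixedSubmodule ρ).subtype _)).dvd.trans <|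
      Representation.det_toMatrix₂_invariants_dvd
        (ρ := LinearEquiv.automorphismGroup.toLinearMapMonoidHom.comp ρ) hρ
        (Free.chooseBasis ℤ L) hd0 (Free.chooseBasis ℤ (fixedSubmodule ρ))
  refine ⟨ne_zero_of_dvd_ne_zero ?_ hdvd, hdvd⟩
  exact pow_ne_zero _ (mul_ne_zero hd0 (Nat.cast_ne_zero.mpr Fintype.card_ne_zero))

/-- if `L` is a nondegenerate integral lattice of discriminant `d` and `G` is a
finite group acting on `L` preserving the form, with `L^G ≠ 0`, then the restriction of the
form to `L^G` is nondegenerate (so `L^G` is a lattice) and its discriminant divides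
`(d·|G|)^r`, where `r = rk(L^G)`. -/
theorem stmt0 (L : Type) [AddCommGroup L] [Module.Free ℤ L] [Module.Finite ℤ L]
    (hrank : 0 < Module.finrank ℤ L)
    (B : L →ₗ[ℤ] L →ₗ[ℤ] ℤ) (hsymm : ∀ x y, B x y = B y x)
    (d : ℤ) (hd : d = gramDet ℤ ℤ (fun x y => B x y)) (hd0 : d ≠ 0)
    (G : Type) [Group G] [Fintype G]
    (ρ : G →* (L ≃ₗ[ℤ] L)) (hρ : ∀ (g : G) (x y : L), B (ρ g x) (ρ g y) = B x y)
    (hfix : fixedSubmodule ρ ≠ ⊥) :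
    gramDet ℤ ℤ (fun x y : fixedSubmodule ρ => B x y) ≠ 0 ∧
    gramDet ℤ ℤ (fun x y : fixedSubmodule ρ => B x y) ∣
      (d * (Fintype.card G : ℤ)) ^ (Module.finrank ℤ (fixedSubmodule ρ)) :=
  stmt0_general L B d hd hd0 G ρ hρ
end

section
/- Let ℓ be a prime, M a finite free Z_ℓ-module with a symmetric Z_ℓ-valued bilinear form, and Γ a group acting on M preserving the form. Let L ⊆ M be a Γ-submodule such that the restriction of the form to L has discriminant d ≠ 0. Then d·(M/L)^Γ is contained in the image of the natural map M^Γ → (M/L)^Γ. -/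
open Matrix LinearMap Module

section Gram

variable {R M L ι : Type*} [CommRing R] [AddCommGroup M] [Module R M] [AddCommGroup L] [Module R L]
  [Fintype ι] [DecidableEq ι]

theorem exists_flip_eq_det_toMatrix₂_smul (b : Basis ι R L) (B : L →ₗ[R] L →ₗ[R] R)
    (f : L →ₗ[R] R) : ∃ y : L, B.flip y = (toMatrix₂ b b B).det • f := by
  set G := toMatrix₂ b b B
  refine ⟨b.equivFun.symm (G.adjugate *ᵥ (f ∘ b)), b.ext fun i => ?_⟩
  have hG : G *ᵥ (G.adjugate *ᵥ (f ∘ b)) = G.det • (f ∘ b) := by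
    rw [mulVec_mulVec, mul_adjugate, smul_mulVec, one_mulVec]
  have := dotProduct_toMatrix₂_mulVec b b B (Pi.single i 1) (G.adjugate *ᵥ (f ∘ b))
  rw [RingHom.coe_id, Function.id_comp, Function.id_comp, hG, single_one_dotProduct,
    Basis.equivFun_symm_single] at this
  exact this.symm

theorem Submodule.exists_mem_smul_sub_mem_orthogonalBilin (B : M →ₗ[R] M →ₗ[R] R)
    {W : Submodule R M} (b : Basis ι R W) (m : M) :
    ∃ y ∈ W, (toMatrix₂ b b (B.domRestrict₁₂ W W)).det • m - y ∈ W.orthogonalBilin B := by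
  obtain ⟨y, hy⟩ :=
    exists_flip_eq_det_toMatrix₂_smul b (B.domRestrict₁₂ W W) ((B.flip m).domRestrict W)
  refine ⟨y, y.2, fun x hx => ?_⟩
  have := LinearMap.congr_fun hy ⟨x, hx⟩
  rw [flip_apply, domRestrict₁₂_apply, LinearMap.smul_apply, domRestrict_apply, flip_apply,
    smul_eq_mul] at this
  show B x (_ • m - y) = 0
  rw [map_sub, map_smul, smul_eq_mul, this, sub_self]

theorem Submodule.disjoint_orthogonalBilin_of_det_ne_zero [IsDomain R] (B : M →ₗ[R] M →ₗ[R] R)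
    {W : Submodule R M} (b : Basis ι R W) (hdet : (toMatrix₂ b b (B.domRestrict₁₂ W W)).det ≠ 0) :
    Disjoint W (W.orthogonalBilin B) := by
  refine Submodule.disjoint_def.2 fun x hxW hx => ?_
  have := separatingRight_of_det_ne_zero b hdet ⟨x, hxW⟩ fun y => hx y y.2
  exact congrArg Subtype.val this

end Gram

section Invariant

variable {R M Γ : Type*} [CommRing R] [AddCommGroup M] [Module R M] [Group Γ]
  {B : M →ₗ[R] M →ₗ[R] R} {ρ : Γ →* (M ≃ₗ[R] M)} {W : Submodule R M}

theorem Submodule.apply_mem_orthogonalBilin (hρ : ∀ γ x y, B (ρ γ x) (ρ γ y) = B x y)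
    (hW : ∀ γ, W.map (ρ γ).toLinearMap ≤ W) (γ : Γ) {z : M} (hz : z ∈ W.orthogonalBilin B) :
    ρ γ z ∈ W.orthogonalBilin B := by
  intro x hx
  have hx' : ρ γ⁻¹ x ∈ W := hW γ⁻¹ ⟨x, hx, rfl⟩
  have : ρ γ (ρ γ⁻¹ x) = x := by
    rw [map_inv, LinearEquiv.coe_inv, LinearEquiv.apply_symm_apply]
  show B x (ρ γ z) = 0
  rw [← this, hρ]
  exact hz _ hx'

theorem Submodule.apply_eq_self_of_mem_orthogonalBilin (hρ : ∀ γ x y, B (ρ γ x) (ρ γ y) = B x y)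
    (hW : ∀ γ, W.map (ρ γ).toLinearMap ≤ W) (hdisj : Disjoint W (W.orthogonalBilin B))
    {z : M} (hz : z ∈ W.orthogonalBilin B) (hzW : ∀ γ, ρ γ z - z ∈ W) (γ : Γ) : ρ γ z = z :=
  sub_eq_zero.1 <| Submodule.disjoint_def.1 hdisj _ (hzW γ) <|
    Submodule.sub_mem _ (apply_mem_orthogonalBilin hρ hW γ hz) hz

end Invariant

/-- An element of `(M/L)^Γ` is represented by `m : M` with `ρ γ m - m ∈ L` for all `γ`; its
`d`-multiple is in the image of `M^Γ` iff there is a `Γ`-fixed `m'` with `d • m - m' ∈ L`. -/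
theorem stmt2_general (ℓ : ℕ) [Fact ℓ.Prime]
    (M : Type) [AddCommGroup M] [Module ℤ_[ℓ] M] [Module.Free ℤ_[ℓ] M] [Module.Finite ℤ_[ℓ] M]
    (B : M →ₗ[ℤ_[ℓ]] M →ₗ[ℤ_[ℓ]] ℤ_[ℓ])
    (Γ : Type) [Group Γ] (ρ : Γ →* (M ≃ₗ[ℤ_[ℓ]] M))
    (hρ : ∀ (γ : Γ) (x y : M), B (ρ γ x) (ρ γ y) = B x y)
    (L : Submodule ℤ_[ℓ] M) (hL : ∀ γ : Γ, L.map (ρ γ).toLinearMap ≤ L)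
    (d : ℤ_[ℓ]) (hd : d = gramDet ℤ_[ℓ] ℤ_[ℓ] (fun x y : L => B x y)) (hd0 : d ≠ 0) :
    ∀ m : M, (∀ γ : Γ, ρ γ m - m ∈ L) →
      ∃ m' : M, (∀ γ : Γ, ρ γ m' = m') ∧ d • m - m' ∈ L := by
  intro m hm
  classical
  set b := Module.Free.chooseBasis ℤ_[ℓ] L
  have hdet : d = (toMatrix₂ b b (B.domRestrict₁₂ L L)).det := by
    rw [hd, gramDet]
    congr 1 with i j
    rw [toMatrix₂_apply]
    rfl
  rw [hdet] at hd0
  obtain ⟨y, hyL, hy⟩ := L.exists_mem_smul_sub_mem_orthogonalBilin B b m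
  rw [← hdet] at hy
  refine ⟨_, L.apply_eq_self_of_mem_orthogonalBilin hρ hL
    (L.disjoint_orthogonalBilin_of_det_ne_zero B b hd0) hy fun γ => ?_, by simpa using hyL⟩
  have : ρ γ (d • m - y) - (d • m - y) = d • (ρ γ m - m) - (ρ γ y - y) := by
    simp only [map_sub, map_smul, smul_sub]; abel
  rw [this]
  exact L.sub_mem (L.smul_mem _ (hm γ)) (L.sub_mem (hL γ ⟨y, hyL, rfl⟩) hyL)

/-- let `ℓ` be a prime, `M` a finite free `ℤ_ℓ`-module with a symmetric
`ℤ_ℓ`-valued bilinear form, and `Γ` a group acting on `M` preserving the form. If `L ⊆ M`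
is a `Γ`-submodule on which the restricted form has discriminant `d ≠ 0`, then
`d·(M/L)^Γ` is contained in the image of the natural map `M^Γ → (M/L)^Γ`.
(An element of `(M/L)^Γ` is represented by `m : M` with `ρ γ m - m ∈ L` for all `γ`;
its `d`-multiple is in the image of `M^Γ` iff there is a `Γ`-fixed `m'` with `d•m - m' ∈ L`.) -/
theorem stmt2 (ℓ : ℕ) [Fact ℓ.Prime]
    (M : Type) [AddCommGroup M] [Module ℤ_[ℓ] M] [Module.Free ℤ_[ℓ] M] [Module.Finite ℤ_[ℓ] M]
    (hrank : 0 < Module.finrank ℤ_[ℓ] M)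
    (B : M →ₗ[ℤ_[ℓ]] M →ₗ[ℤ_[ℓ]] ℤ_[ℓ]) (hsymm : ∀ x y, B x y = B y x)
    (Γ : Type) [Group Γ] (ρ : Γ →* (M ≃ₗ[ℤ_[ℓ]] M))
    (hρ : ∀ (γ : Γ) (x y : M), B (ρ γ x) (ρ γ y) = B x y)
    (L : Submodule ℤ_[ℓ] M) (hL : ∀ γ : Γ, L.map (ρ γ).toLinearMap ≤ L)
    (d : ℤ_[ℓ]) (hd : d = gramDet ℤ_[ℓ] ℤ_[ℓ] (fun x y : L => B x y)) (hd0 : d ≠ 0) :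
    ∀ m : M, (∀ γ : Γ, ρ γ m - m ∈ L) →
      ∃ m' : M, (∀ γ : Γ, ρ γ m' = m') ∧ d • m - m' ∈ L :=
  stmt2_general ℓ M B Γ ρ hρ L hL d hd hd0
end

section
/- Let Λ be an order in a semisimple Q_ℓ-algebra B, and let M ⊇ Λ be a maximal order containing Λ with Λ ≠ M. Then the F_ℓ-algebra Λ/ℓ contains a nonzero nilpotent two-sided ideal; in particular Λ/ℓ is not semisimple. -/
/-!
If `Λ ⊊ M`, pick `b ∈ M \ Λ` and the least `k` with `ℓ^k b ∈ Λ`; then `x = ℓ^k b` lies in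
`N = Λ ∩ ℓM` but not in `ℓΛ`, so the image of the two-sided ideal `N` in `Λ/ℓ` is nonzero.
Since `M` is finitely generated and `ℚ_ℓ Λ = B`, some `ℓ^a` maps `M` into `Λ`, hence a product of
`a + 1` elements of `N` lies in `ℓ^{a+1} M ⊆ ℓΛ`: the image of `N` is nilpotent. A semisimple ring
has no nonzero nil ideal, since every left ideal is generated by an idempotent.
-/

open scoped TensorProduct

section ReductionModN

variable {S : Type*} [AddCommGroup S] {n : ℕ}

theorem TensorProduct.natCast_tmul_eq_one_tmul_nsmul (m : ℕ) (x : S) :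
    (m : ZMod n) ⊗ₜ[ℤ] x = 1 ⊗ₜ[ℤ] (m • x) := by
  rw [← TensorProduct.smul_tmul, nsmul_eq_mul, mul_one]

theorem TensorProduct.one_tmul_surjective [NeZero n] :
    Function.Surjective fun x : S ↦ (1 : ZMod n) ⊗ₜ[ℤ] x := by
  intro y
  induction y using TensorProduct.induction_on with
  | zero => exact ⟨0, TensorProduct.tmul_zero _ _⟩
  | tmul c x =>
    refine ⟨c.val • x, ?_⟩
    dsimp only
    rw [← natCast_tmul_eq_one_tmul_nsmul, ZMod.natCast_zmod_val]
  | add u v hu hv =>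
    obtain ⟨a, rfl⟩ := hu
    obtain ⟨b, rfl⟩ := hv
    exact ⟨a + b, TensorProduct.tmul_add _ _ _⟩

theorem TensorProduct.one_tmul_eq_zero_iff (x : S) :
    (1 : ZMod n) ⊗ₜ[ℤ] x = 0 ↔ ∃ y, n • y = x := by
  let e : ZMod n ≃ₗ[ℤ] ℤ ⧸ Ideal.span {(n : ℤ)} :=
    (Int.quotientSpanNatEquivZMod n).symm.toAddEquiv.toIntLinearEquiv
  -- `ZMod n ⊗[ℤ] S ≃ S ⧸ n • S`, sending `1 ⊗ₜ x` to the class of `x`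
  let f := congr e (LinearEquiv.refl ℤ S) ≪≫ₗ quotTensorEquivQuotSMul S _
  have hf : f (1 ⊗ₜ x) = Submodule.Quotient.mk x := by
    have he : e 1 = Ideal.Quotient.mk _ 1 := map_one (Int.quotientSpanNatEquivZMod n).symm
    rw [LinearEquiv.trans_apply, congr_tmul, he, quotTensorEquivQuotSMul_mk_tmul, one_smul]
    rfl
  rw [← f.map_eq_zero_iff, hf, Submodule.Quotient.mk_eq_zero,
    Submodule.ideal_span_singleton_smul, Submodule.mem_smul_pointwise_iff_exists]
  simp only [Submodule.mem_top, true_and, natCast_zsmul]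

end ReductionModN

theorem IsSemisimpleRing.eq_bot_of_forall_isNilpotent {R : Type*} [Ring R] [IsSemisimpleRing R]
    (I : Ideal R) (h : ∀ x ∈ I, IsNilpotent x) : I = ⊥ := by
  obtain ⟨e, he, rfl⟩ := IsSemisimpleRing.ideal_eq_span_idempotent I
  obtain ⟨k, hk⟩ := h e (Ideal.subset_span rfl)
  rw [← he.pow_succ_eq k, pow_succ, hk, zero_mul, Ideal.span_singleton_eq_bot]

theorem List.exists_map_eq_of_forall_mem_image {α β : Type*} {f : α → β} {s : Set α}
    {l : List β} (hl : ∀ y ∈ l, y ∈ f '' s) : ∃ l' : List α, (∀ x ∈ l', x ∈ s) ∧ l'.map f = l := by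
  induction l with
  | nil => exact ⟨[], by simp, rfl⟩
  | cons y l ih =>
    obtain ⟨x, hx, rfl⟩ := hl y mem_cons_self
    obtain ⟨l', hl', rfl⟩ := ih fun z hz ↦ hl z (mem_cons_of_mem _ hz)
    exact ⟨x :: l', by simpa [hx] using hl', rfl⟩

namespace TwoSidedIdeal

variable {R S : Type*} [Ring R] [Ring S]

theorem eq_bot_of_forall_list_prod_eq_zero [IsSemisimpleRing R] (I : TwoSidedIdeal R) (k : ℕ)
    (h : ∀ l : List R, l.length = k → (∀ x ∈ l, x ∈ I) → l.prod = 0) : I = ⊥ := by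
  have hnil (x : R) (hx : x ∈ I.asIdeal) : IsNilpotent x := by
    refine ⟨k, ?_⟩
    simpa using h (List.replicate k x) (List.length_replicate ..)
      (fun y hy ↦ List.eq_of_mem_replicate hy ▸ mem_asIdeal.mp hx)
  ext x
  rw [mem_bot, ← mem_asIdeal, IsSemisimpleRing.eq_bot_of_forall_isNilpotent _ hnil, Ideal.mem_bot]

theorem mem_map_of_surjective {f : R →+* S} (hf : Function.Surjective f) {I : TwoSidedIdeal R}
    {y : S} : y ∈ I.map f ↔ y ∈ f '' I := by
  refine ⟨fun hy ↦ ?_, fun hy ↦ subset_span hy⟩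
  induction hy using span_induction with
  | mem y hy => exact hy
  | zero => exact ⟨0, I.zero_mem, map_zero f⟩
  | add y z _ _ hy hz =>
    obtain ⟨a, ha, rfl⟩ := hy
    obtain ⟨b, hb, rfl⟩ := hz
    exact ⟨a + b, I.add_mem ha hb, map_add f a b⟩
  | neg y _ hy =>
    obtain ⟨a, ha, rfl⟩ := hy
    exact ⟨-a, I.neg_mem ha, map_neg f a⟩
  | left_absorb c y _ hy =>
    obtain ⟨a, ha, rfl⟩ := hy
    obtain ⟨c, rfl⟩ := hf c
    exact ⟨c * a, I.mul_mem_left c a ha, map_mul f c a⟩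
  | right_absorb c y _ hy =>
    obtain ⟨a, ha, rfl⟩ := hy
    obtain ⟨c, rfl⟩ := hf c
    exact ⟨a * c, I.mul_mem_right a c ha, map_mul f a c⟩

theorem list_prod_eq_zero_of_forall_mem_map {f : R →+* S} (hf : Function.Surjective f)
    {I : TwoSidedIdeal R} {k : ℕ}
    (h : ∀ l : List R, l.length = k → (∀ x ∈ l, x ∈ I) → f l.prod = 0)
    (l : List S) (hlen : l.length = k) (hl : ∀ y ∈ l, y ∈ I.map f) : l.prod = 0 := by
  obtain ⟨l', hl', rfl⟩ :=
    List.exists_map_eq_of_forall_mem_image fun y hy ↦ (mem_map_of_surjective hf).mp (hl y hy)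
  rw [← map_list_prod]
  exact h l' (by simpa using hlen) hl'

end TwoSidedIdeal

theorem Padic.exists_pow_mul_mem_padicInt {p : ℕ} [Fact p.Prime] (q : ℚ_[p]) :
    ∃ (k : ℕ) (z : ℤ_[p]), (z : ℚ_[p]) = p ^ k * q := by
  rcases eq_or_ne q 0 with rfl | hq
  · exact ⟨0, 0, by simp⟩
  have hq' : 0 < ‖q‖ := norm_pos_iff.mpr hq
  obtain ⟨k, hk⟩ := PadicInt.exists_pow_neg_lt p (inv_pos.mpr hq')
  refine ⟨k, ⟨p ^ k * q, ?_⟩, rfl⟩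
  rw [norm_mul, norm_pow, Padic.norm_p, inv_pow, ← zpow_natCast, ← zpow_neg]
  exact (mul_lt_mul_of_pos_right hk hq' |>.trans_eq (inv_mul_cancel₀ hq'.ne')).le

theorem Submodule.exists_pow_smul_mem_of_mem_span {p : ℕ} [Fact p.Prime] {V : Type*}
    [AddCommGroup V] [Module ℚ_[p] V] [Module ℤ_[p] V] [IsScalarTower ℤ_[p] ℚ_[p] V]
    {N : Submodule ℤ_[p] V} {v : V} (hv : v ∈ span ℚ_[p] (N : Set V)) :
    ∃ k : ℕ, p ^ k • v ∈ N := by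
  induction hv using span_induction with
  | mem v hv => exact ⟨0, by simpa using hv⟩
  | zero => exact ⟨0, by simp⟩
  | add u v _ _ hu hv =>
    obtain ⟨k, hk⟩ := hu
    obtain ⟨j, hj⟩ := hv
    refine ⟨k + j, ?_⟩
    rw [smul_add, pow_add, mul_smul, mul_smul, smul_comm (p ^ k) (p ^ j) u]
    exact N.add_mem (N.nsmul_mem hk _) (N.nsmul_mem hj _)
  | smul q v _ hv =>
    obtain ⟨k, hk⟩ := hv
    obtain ⟨j, z, hz⟩ := Padic.exists_pow_mul_mem_padicInt q
    refine ⟨j + k, ?_⟩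
    have : p ^ (j + k) • q • v = z • p ^ k • v := by
      rw [← algebraMap_smul ℚ_[p] z, PadicInt.algebraMap_apply, hz, mul_smul, pow_add, mul_smul]
      simp only [← Nat.cast_smul_eq_nsmul ℚ_[p], Nat.cast_pow, smul_comm q]
    rw [this]
    exact N.smul_mem z hk

theorem Submodule.exists_pow_smul_mem_of_fg {R M : Type*} [CommSemiring R] [AddCommMonoid M]
    [Module R M] (n : ℕ) (N : Submodule R M) {L : Submodule R M} (hL : L.FG)
    (h : ∀ x ∈ L, ∃ k : ℕ, n ^ k • x ∈ N) : ∃ a : ℕ, ∀ x ∈ L, n ^ a • x ∈ N := by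
  induction L, hL using fg_induction with
  | singleton g =>
    obtain ⟨a, ha⟩ := h g (mem_span_singleton_self g)
    refine ⟨a, fun x hx ↦ ?_⟩
    obtain ⟨c, rfl⟩ := mem_span_singleton.mp hx
    rw [smul_comm]
    exact N.smul_mem c ha
  | sup L₁ L₂ _ _ ih₁ ih₂ =>
    obtain ⟨a₁, ha₁⟩ := ih₁ fun x hx ↦ h x (mem_sup_left hx)
    obtain ⟨a₂, ha₂⟩ := ih₂ fun x hx ↦ h x (mem_sup_right hx)
    refine ⟨a₁ + a₂, fun x hx ↦ ?_⟩
    obtain ⟨y, hy, z, hz, rfl⟩ := mem_sup.mp hx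
    rw [smul_add, pow_add, mul_smul, mul_smul, smul_comm (n ^ a₁) (n ^ a₂) y]
    exact N.add_mem (N.nsmul_mem (ha₁ y hy) _) (N.nsmul_mem (ha₂ z hz) _)

theorem exists_mem_nsmul_not_mem_nsmul {B S : Type*} [AddCommMonoid B] [IsAddTorsionFree B]
    [SetLike S B] [AddSubmonoidClass S B] {n : ℕ} (hn : n ≠ 0) {Λ M : S} {b : B}
    (hbM : b ∈ M) (hbΛ : b ∉ Λ) (h : ∃ k : ℕ, n ^ k • b ∈ Λ) :
    ∃ x ∈ Λ, (∃ m ∈ M, n • m = x) ∧ ∀ y ∈ Λ, n • y ≠ x := by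
  classical
  obtain ⟨k, hk⟩ : ∃ k, Nat.find h = k + 1 :=
    Nat.exists_eq_add_one.mpr <| Nat.pos_of_ne_zero fun h0 ↦
      hbΛ (by simpa [h0] using Nat.find_spec h)
  have hsucc : n ^ (k + 1) • b = n • n ^ k • b := by rw [pow_succ', mul_smul]
  refine ⟨n ^ (k + 1) • b, hk ▸ Nat.find_spec h, ⟨n ^ k • b, nsmul_mem hbM _, hsucc.symm⟩, ?_⟩
  rintro y hy hyx
  rw [hsucc] at hyx
  exact Nat.find_min h (hk ▸ k.lt_succ_self) (nsmul_right_injective hn hyx ▸ hy)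

theorem List.exists_nsmul_eq_prod_of_forall_mem {B S : Type*} [Semiring B] [SetLike S B]
    [SubsemiringClass S B] {M : S} {n : ℕ} {l : List B} (hl : ∀ x ∈ l, ∃ m ∈ M, n • m = x) :
    ∃ m ∈ M, n ^ l.length • m = l.prod := by
  induction l with
  | nil => exact ⟨1, one_mem M, by simp⟩
  | cons x l ih =>
    obtain ⟨m, hm, rfl⟩ := hl x mem_cons_self
    obtain ⟨m', hm', hl'⟩ := ih fun y hy ↦ hl y (mem_cons_of_mem _ hy)
    refine ⟨m * m', mul_mem hm hm', ?_⟩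
    rw [prod_cons, ← hl', smul_mul_smul_comm, length_cons, pow_succ']

namespace Subalgebra

variable {R B : Type*} [CommRing R] [Ring B] [Algebra R B] {Λ M : Subalgebra R B}

/-- The two-sided ideal `Λ ∩ nM` of `Λ`. -/
def interNSMulIdeal (hΛM : Λ ≤ M) (n : ℕ) : TwoSidedIdeal Λ :=
  .mk' {x | ∃ m ∈ M, n • m = (x : B)}
    ⟨0, M.zero_mem, by simp⟩
    (fun ⟨m, hm, hx⟩ ⟨m', hm', hy⟩ ↦ ⟨m + m', M.add_mem hm hm', by simp [hx, hy]⟩)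
    (fun ⟨m, hm, hx⟩ ↦ ⟨-m, M.neg_mem hm, by simp [hx]⟩)
    (fun {y _} ⟨m, hm, hx⟩ ↦
      ⟨y * m, M.mul_mem (hΛM y.2) hm, by rw [MulMemClass.coe_mul, ← hx, mul_smul_comm]⟩)
    (fun {_ y} ⟨m, hm, hx⟩ ↦
      ⟨m * y, M.mul_mem hm (hΛM y.2), by rw [MulMemClass.coe_mul, ← hx, smul_mul_assoc]⟩)

theorem mem_interNSMulIdeal {hΛM : Λ ≤ M} {n : ℕ} {x : Λ} :
    x ∈ interNSMulIdeal hΛM n ↔ ∃ m ∈ M, n • m = (x : B) :=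
  TwoSidedIdeal.mem_mk' ..

theorem exists_nsmul_eq_list_prod_of_mem_interNSMulIdeal (hΛM : Λ ≤ M) {n a : ℕ}
    (ha : ∀ b ∈ M, n ^ a • b ∈ Λ) (l : List Λ) (hlen : l.length = a + 1)
    (hl : ∀ x ∈ l, x ∈ interNSMulIdeal hΛM n) : ∃ y : Λ, n • y = l.prod := by
  obtain ⟨m, hm, hprod⟩ := List.exists_nsmul_eq_prod_of_forall_mem (M := M) (l := l.map (↑))
    (by simpa [mem_interNSMulIdeal] using hl)
  refine ⟨⟨n ^ a • m, ha m hm⟩, Subtype.ext ?_⟩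
  rw [List.length_map, hlen, pow_succ', mul_smul] at hprod
  simpa [SubmonoidClass.coe_list_prod] using hprod

end Subalgebra

theorem stmt9_general (ℓ : ℕ) [Fact ℓ.Prime]
    (B : Type) [Ring B] [Algebra ℚ_[ℓ] B]
    [Algebra ℤ_[ℓ] B] [IsScalarTower ℤ_[ℓ] ℚ_[ℓ] B]
    (Λ M : Subalgebra ℤ_[ℓ] B)
    [Module.Finite ℤ_[ℓ] M]
    (hΛspan : Submodule.span ℚ_[ℓ] (Λ : Set B) = ⊤)
    (hΛM : Λ ≤ M) (hne : Λ ≠ M) :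
    (∃ I : TwoSidedIdeal (ZMod ℓ ⊗[ℤ] Λ), I ≠ ⊥ ∧
      ∃ k : ℕ, ∀ l : List (ZMod ℓ ⊗[ℤ] Λ), l.length = k → (∀ x ∈ l, x ∈ I) → l.prod = 0) ∧
    ¬ IsSemisimpleRing (ZMod ℓ ⊗[ℤ] Λ) := by
  have hℓ : ℓ ≠ 0 := (Fact.out : ℓ.Prime).ne_zero
  have : IsAddTorsionFree B := .of_isTorsionFree ℚ_[ℓ] B
  have hpow (b : B) : ∃ k : ℕ, ℓ ^ k • b ∈ Λ :=
    Submodule.exists_pow_smul_mem_of_mem_span (N := Subalgebra.toSubmodule Λ)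
      (hΛspan ▸ Submodule.mem_top)
  obtain ⟨a, ha⟩ := Submodule.exists_pow_smul_mem_of_fg ℓ (Subalgebra.toSubmodule Λ)
    (L := Subalgebra.toSubmodule M) (Module.Finite.iff_fg.mp ‹_›) fun b _ ↦ hpow b
  obtain ⟨b, hbM, hbΛ⟩ := SetLike.not_le_iff_exists.mp fun h ↦ hne (le_antisymm hΛM h)
  obtain ⟨x, hxΛ, hxN, hx⟩ := exists_mem_nsmul_not_mem_nsmul hℓ hbM hbΛ (hpow b)
  -- explicit arguments keep the ring structure on `ZMod ℓ` the one the statement uses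
  let π := (Algebra.TensorProduct.includeRight (R := ℤ) (A := ZMod ℓ) (B := Λ)).toRingHom
  have hπ : Function.Surjective π := TensorProduct.one_tmul_surjective
  have hπ_eq_zero (y : Λ) : π y = 0 ↔ ∃ z : Λ, ℓ • z = y := TensorProduct.one_tmul_eq_zero_iff y
  let I := (Subalgebra.interNSMulIdeal hΛM ℓ).map π
  have hnil : ∀ l : List (ZMod ℓ ⊗[ℤ] Λ), l.length = a + 1 → (∀ y ∈ l, y ∈ I) → l.prod = 0 :=
    TwoSidedIdeal.list_prod_eq_zero_of_forall_mem_map hπ fun l hlen hl ↦ (hπ_eq_zero _).mpr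
      (Subalgebra.exists_nsmul_eq_list_prod_of_mem_interNSMulIdeal hΛM ha l hlen hl)
  have hI : I ≠ ⊥ := by
    intro hI
    have hxI : π ⟨x, hxΛ⟩ ∈ I := (TwoSidedIdeal.mem_map_of_surjective hπ).mpr
      ⟨_, Subalgebra.mem_interNSMulIdeal.mpr hxN, rfl⟩
    obtain ⟨z, hz⟩ := (hπ_eq_zero _).mp (by rwa [hI, TwoSidedIdeal.mem_bot] at hxI)
    exact hx z z.2 (congrArg Subtype.val hz)
  exact ⟨⟨I, hI, a + 1, hnil⟩, fun _ ↦ hI (I.eq_bot_of_forall_list_prod_eq_zero _ hnil)⟩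

/-- let `Λ` be an order in a semisimple `ℚ_ℓ`-algebra `B` and `M ⊇ Λ` a maximal
order with `Λ ≠ M`. Then the `𝔽_ℓ`-algebra `Λ/ℓ ≅ ZMod ℓ ⊗ Λ` contains a nonzero nilpotent
two-sided ideal; in particular it is not semisimple. -/
theorem stmt9 (ℓ : ℕ) [Fact ℓ.Prime]
    (B : Type) [Ring B] [Algebra ℚ_[ℓ] B] [FiniteDimensional ℚ_[ℓ] B] [IsSemisimpleRing B]
    [Algebra ℤ_[ℓ] B] [IsScalarTower ℤ_[ℓ] ℚ_[ℓ] B]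
    (Λ M : Subalgebra ℤ_[ℓ] B)
    [Module.Finite ℤ_[ℓ] Λ] [Module.Finite ℤ_[ℓ] M]
    (hΛspan : Submodule.span ℚ_[ℓ] (Λ : Set B) = ⊤)
    (hMspan : Submodule.span ℚ_[ℓ] (M : Set B) = ⊤)
    (hΛM : Λ ≤ M) (hne : Λ ≠ M)
    (hmax : ∀ M' : Subalgebra ℤ_[ℓ] B, Module.Finite ℤ_[ℓ] M' →
      Submodule.span ℚ_[ℓ] (M' : Set B) = ⊤ → M ≤ M' → M' = M) :
    (∃ I : TwoSidedIdeal (ZMod ℓ ⊗[ℤ] Λ), I ≠ ⊥ ∧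
      ∃ k : ℕ, ∀ l : List (ZMod ℓ ⊗[ℤ] Λ), l.length = k → (∀ x ∈ l, x ∈ I) → l.prod = 0) ∧
    ¬ IsSemisimpleRing (ZMod ℓ ⊗[ℤ] Λ) :=
  stmt9_general ℓ B Λ M hΛspan hΛM hne
end

section
/- Let A and B be isogenous abelian varieties over a field k. Then discr(A)/discr(B) = Δ_A/Δ_B = δ_A/δ_B, where these are the discriminants of the reduced-trace form, the intrinsic trace form, and the Tate-module trace form respectively on End(A) and End(B), viewed as orders in the common algebra End(A)⊗Q ≅ End(B)⊗Q. -/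
open scoped TensorProduct

/-- `t : B → K` is the (relative) reduced trace of the finite-dimensional separable
semisimple `K`-algebra `B`: after base change to an algebraic closure, `B` becomes a finite
product of matrix algebras and `t` is computed by the sum of the matrix traces. -/
def IsReducedTrace (K : Type) [Field K] (B : Type) [Ring B] [Algebra K B]
    (t : B →ₗ[K] K) : Prop :=
  ∃ (m : ℕ) (n : Fin m → ℕ)
    (e : (AlgebraicClosure K ⊗[K] B) ≃ₐ[AlgebraicClosure K]
      ((i : Fin m) → Matrix (Fin (n i)) (Fin (n i)) (AlgebraicClosure K))),
    ∀ x : B, algebraMap K (AlgebraicClosure K) (t x)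
      = ∑ i, Matrix.trace (e ((1 : AlgebraicClosure K) ⊗ₜ[K] x) i)


/-- The `R`-linear endomorphism of `W` given by the action of `x : A`. -/
def smulEnd {R A W : Type} [CommSemiring R] [Semiring A] [AddCommMonoid W] [Module R W]
    [Module A W] [SMulCommClass A R W] (x : A) : W →ₗ[R] W where
  toFun w := x • w
  map_add' := smul_add x
  map_smul' r w := by simpa using smul_comm x r w

/-! A `ℤ`-basis of a full lattice in a `ℚ`-vector space is a `ℚ`-basis, and the Gram matrices of
a bilinear form in two bases differ by congruence with the change-of-basis matrix `P`. Hence the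
Gram determinants of `Λ₂` are those of `Λ₁` times `(det P)²` (the squared ratio of the indices
`[Λ₁ : Λ₁ ∩ Λ₂]`, `[Λ₂ : Λ₁ ∩ Λ₂]`), a factor independent of the form. Applying this to the
forms `(x, y) ↦ τ (x * y)` for the three traces `τ` gives the three identities. -/

open Module

section FullLattice

variable {R K V M ι : Type*} [CommRing R] [Field K] [Algebra R K] [IsFractionRing R K]
  [AddCommGroup V] [Module K V] [Module R V] [IsScalarTower R K V] [AddCommGroup M] [Module R M]

noncomputable def Module.Basis.ofFullLattice (b : Basis ι R M) (f : M →ₗ[R] V)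
    (hf : Function.Injective f) (hspan : Submodule.span K (Set.range f) = ⊤) : Basis ι K V :=
  have hli : LinearIndependent K (f ∘ b) :=
    (LinearIndependent.iff_fractionRing R K).1 <|
      b.linearIndependent.map' f (LinearMap.ker_eq_bot.2 hf)
  Basis.mk hli <| by
    rw [← hspan, Submodule.span_le]
    rintro _ ⟨m, rfl⟩
    refine Submodule.span_le_restrictScalars R K _ ?_
    rw [Set.range_comp, ← Submodule.map_span, b.span_eq]
    exact ⟨m, trivial, rfl⟩

@[simp]
theorem Module.Basis.ofFullLattice_apply (b : Basis ι R M) (f : M →ₗ[R] V)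
    (hf : Function.Injective f) (hspan : Submodule.span K (Set.range f) = ⊤) (i : ι) :
    b.ofFullLattice f hf hspan i = f (b i) := by
  simp [ofFullLattice]

end FullLattice

namespace LinearMap.BilinForm

variable {K V : Type*} [AddCommGroup V]

theorem det_toMatrix_basis_change [CommRing K] [Module K V] {ι : Type*} [Fintype ι]
    [DecidableEq ι] (b c : Basis ι K V) (φ : LinearMap.BilinForm K V) :
    (toMatrix c φ).det = (b.toMatrix c).det ^ 2 * (toMatrix b φ).det := by
  rw [← toMatrix_mul_basis_toMatrix b c, Matrix.det_mul, Matrix.det_mul, Matrix.det_transpose]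
  ring

theorem exists_det_toMatrix_eq_mul [Field K] [Module K V] {ι ι' : Type*} [Fintype ι] [Fintype ι']
    [DecidableEq ι] [DecidableEq ι'] (b : Basis ι K V) (c : Basis ι' K V) :
    ∃ r : K, ∀ φ : LinearMap.BilinForm K V, (toMatrix c φ).det = r * (toMatrix b φ).det := by
  let e := c.indexEquiv b
  refine ⟨(b.toMatrix (c.reindex e)).det ^ 2, fun φ => ?_⟩
  have hreindex : toMatrix (c.reindex e) φ = Matrix.reindex e e (toMatrix c φ) := by
    ext i j; simp [toMatrix_apply]
  rw [← det_toMatrix_basis_change, hreindex, Matrix.det_reindex_self]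

end LinearMap.BilinForm

section GramDet

variable {R K V : Type} [CommRing R] [Field K] [Algebra R K] [IsFractionRing R K]
  [AddCommGroup V] [Module K V] [Module R V] [IsScalarTower R K V]

theorem gramDet_comp_eq_det_toMatrix {M : Type} [AddCommGroup M] [Module R M] [Free R M]
    [Module.Finite R M] [DecidableEq (Free.ChooseBasisIndex R M)] (f : M →ₗ[R] V)
    (hf : Function.Injective f) (hspan : Submodule.span K (Set.range f) = ⊤)
    (φ : LinearMap.BilinForm K V) :
    gramDet R K (fun x y => φ (f x) (f y))
      = (LinearMap.BilinForm.toMatrix ((Free.chooseBasis R M).ofFullLattice f hf hspan) φ).det := by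
  unfold gramDet
  congr! 1
  ext i j
  simp [LinearMap.BilinForm.toMatrix_apply]

theorem exists_gramDet_eq_mul_gramDet {M₁ M₂ : Type} [AddCommGroup M₁] [Module R M₁] [Free R M₁]
    [Module.Finite R M₁] [AddCommGroup M₂] [Module R M₂] [Free R M₂] [Module.Finite R M₂]
    (f₁ : M₁ →ₗ[R] V) (f₂ : M₂ →ₗ[R] V) (hf₁ : Function.Injective f₁)
    (hf₂ : Function.Injective f₂) (hspan₁ : Submodule.span K (Set.range f₁) = ⊤)
    (hspan₂ : Submodule.span K (Set.range f₂) = ⊤) :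
    ∃ r : K, ∀ φ : LinearMap.BilinForm K V,
      gramDet R K (fun x y => φ (f₂ x) (f₂ y)) = r * gramDet R K (fun x y => φ (f₁ x) (f₁ y)) := by
  classical
  obtain ⟨r, hr⟩ := LinearMap.BilinForm.exists_det_toMatrix_eq_mul
    ((Free.chooseBasis R M₁).ofFullLattice f₁ hf₁ hspan₁)
    ((Free.chooseBasis R M₂).ofFullLattice f₂ hf₂ hspan₂)
  refine ⟨r, fun φ => ?_⟩
  rw [gramDet_comp_eq_det_toMatrix f₁ hf₁ hspan₁, gramDet_comp_eq_det_toMatrix f₂ hf₂ hspan₂, hr]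

end GramDet

theorem Subring.exists_gramDet_traceForm_eq_mul {E : Type} [Ring E] [Algebra ℚ E]
    (Λ₁ Λ₂ : Subring E) [Free ℤ Λ₁] [Module.Finite ℤ Λ₁] [Free ℤ Λ₂] [Module.Finite ℤ Λ₂]
    (h₁ : Submodule.span ℚ (Λ₁ : Set E) = ⊤) (h₂ : Submodule.span ℚ (Λ₂ : Set E) = ⊤) :
    ∃ r : ℚ, ∀ τ : E →ₗ[ℚ] ℚ, gramDet ℤ ℚ (fun x y : Λ₂ => τ ((x : E) * (y : E)))
      = r * gramDet ℤ ℚ (fun x y : Λ₁ => τ ((x : E) * (y : E))) := by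
  let incl (Λ : Subring E) : Λ →ₗ[ℤ] E := Λ.subtype.toAddMonoidHom.toIntLinearMap
  have hspan (Λ : Subring E) (h : Submodule.span ℚ (Λ : Set E) = ⊤) :
      Submodule.span ℚ (Set.range (incl Λ)) = ⊤ := by
    show Submodule.span ℚ (Set.range ((↑) : Λ → E)) = ⊤
    rwa [Subtype.range_coe]
  obtain ⟨r, hr⟩ := exists_gramDet_eq_mul_gramDet (incl Λ₁) (incl Λ₂) Subtype.val_injective
    Subtype.val_injective (hspan Λ₁ h₁) (hspan Λ₂ h₂)
  exact ⟨r, fun τ => hr ((LinearMap.mul ℚ E).compr₂ τ)⟩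

theorem stmt13_general
    (E : Type) [Ring E] [Algebra ℚ E]
    (W : Type) [AddCommGroup W] [Module ℚ W]
    [Module E W] [SMulCommClass E ℚ W]
    (t : E →ₗ[ℚ] ℚ)
    (Λ₁ Λ₂ : Subring E)
    [Module.Free ℤ Λ₁] [Module.Finite ℤ Λ₁] [Module.Free ℤ Λ₂] [Module.Finite ℤ Λ₂]
    (h1 : Submodule.span ℚ (Λ₁ : Set E) = ⊤) (h2 : Submodule.span ℚ (Λ₂ : Set E) = ⊤) :
    let d₁ : ℚ := gramDet ℤ ℚ (fun x y : Λ₁ => t ((x : E) * (y : E)));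
    let d₂ : ℚ := gramDet ℤ ℚ (fun x y : Λ₂ => t ((x : E) * (y : E)));
    let Δ₁ : ℚ := gramDet ℤ ℚ
      (fun x y : Λ₁ => LinearMap.trace ℚ E (LinearMap.mulLeft ℚ ((x : E) * (y : E))));
    let Δ₂ : ℚ := gramDet ℤ ℚ
      (fun x y : Λ₂ => LinearMap.trace ℚ E (LinearMap.mulLeft ℚ ((x : E) * (y : E))));
    let δ₁ : ℚ := gramDet ℤ ℚ
      (fun x y : Λ₁ => LinearMap.trace ℚ W (smulEnd ((x : E) * (y : E)) : W →ₗ[ℚ] W));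
    let δ₂ : ℚ := gramDet ℤ ℚ
      (fun x y : Λ₂ => LinearMap.trace ℚ W (smulEnd ((x : E) * (y : E)) : W →ₗ[ℚ] W));
    d₁ * Δ₂ = d₂ * Δ₁ ∧ d₁ * δ₂ = d₂ * δ₁ ∧ Δ₁ * δ₂ = Δ₂ * δ₁ := by
  intro d₁ d₂ Δ₁ Δ₂ δ₁ δ₂
  obtain ⟨r, hr⟩ := Subring.exists_gramDet_traceForm_eq_mul Λ₁ Λ₂ h1 h2
  have hd : d₂ = r * d₁ := hr t
  have hΔ : Δ₂ = r * Δ₁ := hr (LinearMap.trace ℚ E ∘ₗ LinearMap.mul ℚ E)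
  have hδ : δ₂ = r * δ₁ := hr ((LinearMap.trace ℚ W).toAddMonoidHom.comp
    (Module.toModuleEnd ℚ W : E →+* Module.End ℚ W).toAddMonoidHom).toRatLinearMap
  refine ⟨?_, ?_, ?_⟩ <;> simp only [hd, hΔ, hδ] <;> ring

/-- let `A` and `B` be isogenous abelian varieties; then `End(A)` and `End(B)`
are orders `Λ₁, Λ₂` in the common semisimple algebra `E = End(A)⊗ℚ ≅ End(B)⊗ℚ`, acting on the
common rational Tate module `W`, and
`discr(A)/discr(B) = Δ_A/Δ_B = δ_A/δ_B` for the reduced-trace form, the intrinsic trace form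
and the Tate-module trace form (stated cross-multiplied). -/
theorem stmt13
    (E : Type) [Ring E] [Algebra ℚ E] [FiniteDimensional ℚ E] [IsSemisimpleRing E]
    (W : Type) [AddCommGroup W] [Module ℚ W] [FiniteDimensional ℚ W]
    [Module E W] [SMulCommClass E ℚ W] [FaithfulSMul E W]
    (t : E →ₗ[ℚ] ℚ) (ht : IsReducedTrace ℚ E t)
    (Λ₁ Λ₂ : Subring E)
    [Module.Free ℤ Λ₁] [Module.Finite ℤ Λ₁] [Module.Free ℤ Λ₂] [Module.Finite ℤ Λ₂]
    (h1 : Submodule.span ℚ (Λ₁ : Set E) = ⊤) (h2 : Submodule.span ℚ (Λ₂ : Set E) = ⊤) :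
    let d₁ : ℚ := gramDet ℤ ℚ (fun x y : Λ₁ => t ((x : E) * (y : E)));
    let d₂ : ℚ := gramDet ℤ ℚ (fun x y : Λ₂ => t ((x : E) * (y : E)));
    let Δ₁ : ℚ := gramDet ℤ ℚ
      (fun x y : Λ₁ => LinearMap.trace ℚ E (LinearMap.mulLeft ℚ ((x : E) * (y : E))));
    let Δ₂ : ℚ := gramDet ℤ ℚ
      (fun x y : Λ₂ => LinearMap.trace ℚ E (LinearMap.mulLeft ℚ ((x : E) * (y : E))));
    let δ₁ : ℚ := gramDet ℤ ℚ
      (fun x y : Λ₁ => LinearMap.trace ℚ W (smulEnd ((x : E) * (y : E)) : W →ₗ[ℚ] W));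
    let δ₂ : ℚ := gramDet ℤ ℚ
      (fun x y : Λ₂ => LinearMap.trace ℚ W (smulEnd ((x : E) * (y : E)) : W →ₗ[ℚ] W));
    d₁ * Δ₂ = d₂ * Δ₁ ∧ d₁ * δ₂ = d₂ * δ₁ ∧ Δ₁ * δ₂ = Δ₂ * δ₁ :=
  stmt13_general E W t Λ₁ Λ₂ h1 h2
end

section
/- Let k be a field of characteristic p (p = 0 allowed), A an abelian variety over k of dimension g ≥ 1, and Γ = Gal(k̄/k). Suppose the prime-to-p torsion of Br(Ā × Ā^∨)^Γ is annihilated by a positive integer M. Then for every positive integer n not divisible by p: d_p(g)·M·End_Γ(A[n]) ⊆ End(A)/n ⊆ End_Γ(A[n]). In particular, if ℓ is a prime not dividing d_p(g)·M and ℓ ≠ p, then End_Γ(A[ℓ]) = End(A)/ℓ. -/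
/-- Silverberg's constant: `d_p(g) = |GL(2g,𝔽₃)|` if `p ≠ 3` and `|GL(2g,ℤ/4)|` if `p = 3`. -/
noncomputable def dP (p g : ℕ) : ℕ :=
  if p = 3 then Nat.card (Matrix.GeneralLinearGroup (Fin (2 * g)) (ZMod 4))
  else Nat.card (Matrix.GeneralLinearGroup (Fin (2 * g)) (ZMod 3))

/-- The multiplicative group structure (composition) on `A ≃+ A`, as `AddAut.group` gave it in
the older Mathlib. -/
instance addEquivSelfMulGroup (A : Type*) [Add A] : Group (A ≃+ A) where
  mul g h := AddEquiv.trans h g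
  one := AddEquiv.refl _
  inv := AddEquiv.symm
  mul_assoc _ _ _ := rfl
  one_mul _ := rfl
  mul_one _ := rfl
  inv_mul_cancel := AddEquiv.self_trans_symm

/-!
If `f ∈ End_Γ(A[n])`, its class in `End(A[n])/(End(Ā)/n) ⊆ Br(Ā × Ā^∨)` is `Γ`-invariant, hence
killed by `M`; so `M • f` reduces from some `e₀ ∈ End(Ā)` whose reduction is `Γ`-invariant.
Since `Γ` acts on `End(Ā)` through a finite group `G` of order dividing `d_p(g)`, the sum of the
`G`-translates of `e₀` is a `Γ`-invariant endomorphism reducing to `|G| • M • f`.  When `ℓ = n`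
is a prime not dividing `d_p(g) M`, that factor is invertible mod `ℓ`.
-/

theorem dP_pos (p g : ℕ) : 0 < dP p g := by
  unfold dP
  split_ifs <;> exact Nat.card_pos

theorem LinearEquiv.conj_eq_self_iff {R M : Type*} [CommSemiring R] [AddCommMonoid M]
    [Module R M] (e : M ≃ₗ[R] M) (f : Module.End R M) :
    e.conj f = f ↔ e.toLinearMap ∘ₗ f = f ∘ₗ e.toLinearMap := by
  constructor
  · intro h
    ext x
    simpa using congrArg (fun u : Module.End R M => u (e x)) h
  · intro h
    ext x
    simpa using congrArg (fun u : Module.End R M => u (e.symm x)) h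

/-- The averaging argument behind `|G| • H¹(G, -) = 0` for a finite group `G`. -/
theorem MonoidHom.exists_fixed_map_eq_card_range_nsmul {Γ G E F : Type*} [Group Γ] [Group G]
    [AddCommMonoid E] [DistribMulAction G E] [AddCommMonoid F] {Φ : Type*} [FunLike Φ E F]
    [AddMonoidHomClass Φ E F] (ρ : Γ →* G) [Finite ρ.range] (f : Φ) (e : E)
    (he : ∀ γ, f (ρ γ • e) = f e) :
    ∃ e' : E, (∀ γ, ρ γ • e' = e') ∧ f e' = Nat.card ρ.range • f e := by
  have := Fintype.ofFinite ρ.range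
  refine ⟨∑ σ : ρ.range, (σ : G) • e, fun γ => ?_, ?_⟩
  · rw [Finset.smul_sum]
    exact Fintype.sum_bijective (⟨ρ γ, γ, rfl⟩ * ·) (Group.mulLeft_bijective _) _ _
      fun σ => (mul_smul _ _ _).symm
  · rw [map_sum, Nat.card_eq_fintype_card, ← Finset.card_univ, ← Finset.sum_const]
    refine Finset.sum_congr rfl ?_
    rintro ⟨_, γ, rfl⟩ -
    exact he γ

theorem ZModModule.exists_zsmul_nsmul_eq_self {n k : ℕ} (hk : k.Coprime n) (V : Type*)
    [AddCommGroup V] [Module (ZMod n) V] : ∃ u : ℤ, ∀ v : V, u • k • v = v := by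
  obtain ⟨u, w, huw⟩ := Nat.isCoprime_iff_coprime.mpr hk
  refine ⟨u, fun v => ?_⟩
  calc u • k • v = (u * k + w * n) • v - w • n • v := by
        rw [add_smul, mul_smul, mul_smul, natCast_zsmul, natCast_zsmul]; abel
    _ = v := by rw [huw, one_smul, ZModModule.char_nsmul_eq_zero, smul_zero, sub_zero]

theorem stmt18_general (p g M n : ℕ)
    (Γ : Type) [Group Γ]
    (T : Type) [AddCommGroup T] [Module (ZMod n) T]
    (ρ : Γ →* (T ≃ₗ[ZMod n] T))
    (E : Type) [Ring E]
    (ρE : Γ →* RingAut E)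
    (hcard : Nat.card (Set.range fun γ : Γ => ρE γ) ∣ dP p g)
    (red : E →+* Module.End (ZMod n) T)
    (hredeq : ∀ (γ : Γ) (e : E),
      red (ρE γ e) = (ρ γ).toLinearMap ∘ₗ red e ∘ₗ (ρ γ).symm.toLinearMap)
    (BrX : Type) [AddCommGroup BrX]
    (ρB : Γ →* (BrX ≃+ BrX))
    (hMann : ∀ b : BrX, (∀ γ : Γ, ρB γ b = b) → M • b = 0)
    (φ : Module.End (ZMod n) T →+ BrX)
    (hφeq : ∀ (γ : Γ) (f : Module.End (ZMod n) T),
      φ ((ρ γ).toLinearMap ∘ₗ f ∘ₗ (ρ γ).symm.toLinearMap) = ρB γ (φ f))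
    (hφker : ∀ f : Module.End (ZMod n) T, φ f = 0 ↔ f ∈ Set.range red) :
    (∀ e : E, (∀ γ : Γ, ρE γ e = e) → ∀ γ : Γ,
      (ρ γ).toLinearMap ∘ₗ red e = red e ∘ₗ (ρ γ).toLinearMap) ∧
    (∀ f : Module.End (ZMod n) T,
      (∀ γ : Γ, (ρ γ).toLinearMap ∘ₗ f = f ∘ₗ (ρ γ).toLinearMap) →
      ∃ e : E, (∀ γ : Γ, ρE γ e = e) ∧ red e = (dP p g * M : ℕ) • f) ∧
    (n.Prime → ¬ n ∣ dP p g * M →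
      ∀ f : Module.End (ZMod n) T,
        (∀ γ : Γ, (ρ γ).toLinearMap ∘ₗ f = f ∘ₗ (ρ γ).toLinearMap) →
        ∃ e : E, (∀ γ : Γ, ρE γ e = e) ∧ red e = f) := by
  have hcard' : Nat.card ρE.range ∣ dP p g := hcard
  have : Finite ρE.range :=
    Nat.finite_of_card_ne_zero (Nat.pos_of_dvd_of_pos hcard' (dP_pos p g)).ne'
  have dP_mul_M_lifts : ∀ f : Module.End (ZMod n) T,
      (∀ γ : Γ, (ρ γ).toLinearMap ∘ₗ f = f ∘ₗ (ρ γ).toLinearMap) →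
      ∃ e : E, (∀ γ : Γ, ρE γ e = e) ∧ red e = (dP p g * M : ℕ) • f := by
    intro f hf
    have hf_fix γ : (ρ γ).conj f = f := ((ρ γ).conj_eq_self_iff f).2 (hf γ)
    obtain ⟨e₀, he₀⟩ : M • f ∈ Set.range red := (hφker _).1 <| by
      rw [map_nsmul]
      exact hMann _ fun γ => by rw [← hφeq]; exact congrArg φ (hf_fix γ)
    obtain ⟨e, he_fix, he⟩ := ρE.exists_fixed_map_eq_card_range_nsmul red e₀
      fun γ => by
        rw [RingAut.smul_def, hredeq, he₀]
        exact (map_nsmul (ρ γ).conj M f).trans (congrArg (M • ·) (hf_fix γ))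
    obtain ⟨c, hc⟩ := hcard'
    refine ⟨c • e, fun γ => (map_nsmul (ρE γ) c e).trans (congrArg (c • ·) (he_fix γ)), ?_⟩
    rw [map_nsmul, he, he₀, smul_smul, smul_smul, hc, mul_comm c]
  refine ⟨fun e he γ => ?_, dP_mul_M_lifts, fun hn_prime hn_dvd f hf => ?_⟩
  · exact ((ρ γ).conj_eq_self_iff _).1 ((hredeq γ e).symm.trans (congrArg red (he γ)))
  · obtain ⟨e, he_fix, he⟩ := dP_mul_M_lifts f hf
    obtain ⟨u, hu⟩ := ZModModule.exists_zsmul_nsmul_eq_self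
      (hn_prime.coprime_iff_not_dvd.2 hn_dvd).symm (Module.End (ZMod n) T)
    exact ⟨u • e, fun γ => by rw [map_zsmul, he_fix], by rw [map_zsmul, he, hu]⟩

/-- let `k` be a field of characteristic `p` (`p = 0` allowed), `A` an abelian
variety of dimension `g ≥ 1` over `k`, `Γ = Gal(k̄/k)`.  Suppose the prime-to-`p` torsion of
`Br(Ā × Ā^∨)^Γ` is annihilated by `M > 0`.  Then for every `n > 0` not divisible by `p`:
`d_p(g)·M·End_Γ(A[n]) ⊆ End(A)/n ⊆ End_Γ(A[n])`; in particular, if `ℓ = n` is a prime not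
dividing `d_p(g)·M` and `≠ p`, then `End_Γ(A[ℓ]) = End(A)/ℓ`.

Abstraction: `T = A[n]` is a `ℤ/n`-module with Galois action `ρ`; `E = End(Ā)` is a ring
with Galois action `ρE` whose image has order dividing `d_p(g)` (Silverberg), `End(A)` being
the invariants;  `red : E → End(T)` is the (Galois-equivariant) reduction with kernel `nE`;
`BrX = Br(Ā × Ā^∨)(p')`, and by the Künneth computation of the Brauer group of a product,
`End_{ℤ/n}(A[n])/(End(Ā)/n)` embeds `Γ`-equivariantly into `BrX` via `φ`. -/
theorem stmt18 (p g M n : ℕ) (hp : p = 0 ∨ p.Prime) (hg : 1 ≤ g) (hM : 0 < M) (hn : 0 < n)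
    (hpn : ¬ p ∣ n)
    (Γ : Type) [Group Γ]
    (T : Type) [AddCommGroup T] [Module (ZMod n) T]
    (ρ : Γ →* (T ≃ₗ[ZMod n] T))
    (E : Type) [Ring E]
    (ρE : Γ →* RingAut E)
    (hcard : Nat.card (Set.range fun γ : Γ => ρE γ) ∣ dP p g)
    (red : E →+* Module.End (ZMod n) T)
    (hredker : ∀ e : E, red e = 0 ↔ ∃ e' : E, e = n • e')
    (hredeq : ∀ (γ : Γ) (e : E),
      red (ρE γ e) = (ρ γ).toLinearMap ∘ₗ red e ∘ₗ (ρ γ).symm.toLinearMap)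
    (BrX : Type) [AddCommGroup BrX]
    (ρB : Γ →* (BrX ≃+ BrX))
    (hMann : ∀ b : BrX, (∀ γ : Γ, ρB γ b = b) → M • b = 0)
    (φ : Module.End (ZMod n) T →+ BrX)
    (hφeq : ∀ (γ : Γ) (f : Module.End (ZMod n) T),
      φ ((ρ γ).toLinearMap ∘ₗ f ∘ₗ (ρ γ).symm.toLinearMap) = ρB γ (φ f))
    (hφker : ∀ f : Module.End (ZMod n) T, φ f = 0 ↔ f ∈ Set.range red) :
    (∀ e : E, (∀ γ : Γ, ρE γ e = e) → ∀ γ : Γ,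
      (ρ γ).toLinearMap ∘ₗ red e = red e ∘ₗ (ρ γ).toLinearMap) ∧
    (∀ f : Module.End (ZMod n) T,
      (∀ γ : Γ, (ρ γ).toLinearMap ∘ₗ f = f ∘ₗ (ρ γ).toLinearMap) →
      ∃ e : E, (∀ γ : Γ, ρE γ e = e) ∧ red e = (dP p g * M : ℕ) • f) ∧
    (n.Prime → ¬ n ∣ dP p g * M →
      ∀ f : Module.End (ZMod n) T,
        (∀ γ : Γ, (ρ γ).toLinearMap ∘ₗ f = f ∘ₗ (ρ γ).toLinearMap) →
        ∃ e : E, (∀ γ : Γ, ρE γ e = e) ∧ red e = f) :=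
  stmt18_general p g M n Γ T ρ E ρE hcard red hredeq BrX ρB hMann φ hφeq hφker
end
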